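/- arXiv:2407.16242 — 3 statements merged into one kernel-verified Lean document; each statement's English description precedes it below -/
import Mathlib

section
/- For all x in [0,1], the function value arccos(sqrt((1/π)·arccos(x))) satisfies π/4 + x/π ≤ arccos(sqrt((1/π)·arccos(x))) ≤ (π/4)(1+x). -/
/-! Writing `arccos x = π/2 - arcsin x` and using `cos² θ = (1 + cos 2θ)/2`, `arccos √(π⁻¹ · arccos x)` has the
closed form `π/4 + arcsin (2/π · arcsin x) / 2`. On `[0, 1]` both bounds then follow from the
elementary estimates `y ≤ arcsin y ≤ π/2 · y` (the second one is Jordan's inequality), applied once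
to `x` and once to `2/π · arcsin x`. -/

open Real

namespace Real

theorem self_le_arcsin {x : ℝ} (hx₀ : 0 ≤ x) (hx₁ : x ≤ 1) : x ≤ arcsin x := by
  simpa [sin_arcsin (by linarith) hx₁] using sin_le (arcsin_nonneg.2 hx₀)

theorem arcsin_le_pi_div_two_mul {x : ℝ} (hx : 0 ≤ x) : arcsin x ≤ π / 2 * x := by
  rcases le_or_gt x 1 with hx₁ | hx₁
  · have jordan := mul_le_sin (arcsin_nonneg.2 hx) (arcsin_le_pi_div_two x)
    rw [sin_arcsin (by linarith) hx₁] at jordan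
    calc arcsin x = π / 2 * (2 / π * arcsin x) := by field_simp
      _ ≤ π / 2 * x := by gcongr
  · rw [arcsin_of_one_le hx₁.le]
    nlinarith [pi_pos]

theorem arccos_sqrt_inv_pi_mul_arccos (x : ℝ) :
    arccos √(π⁻¹ * arccos x) = π / 4 + arcsin (2 / π * arcsin x) / 2 := by
  set y := 2 / π * arcsin x
  have hy : y ∈ Set.Icc (-1 : ℝ) 1 := by
    have := neg_pi_div_two_le_arcsin x
    have := arcsin_le_pi_div_two x
    simp only [y, Set.mem_Icc, div_mul_eq_mul_div, le_div_iff₀ pi_pos, div_le_iff₀ pi_pos]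
    constructor <;> linarith
  set φ := π / 4 + arcsin y / 2 with hφ
  have hφ₀ : 0 ≤ φ := by linarith [neg_pi_div_two_le_arcsin y]
  have hφ₁ : φ ≤ π / 2 := by linarith [arcsin_le_pi_div_two y]
  have hcos_sq : cos φ ^ 2 = π⁻¹ * arccos x := by
    rw [cos_sq, show 2 * φ = arcsin y + π / 2 by ring, cos_add_pi_div_two,
      sin_arcsin hy.1 hy.2, arccos_eq_pi_div_two_sub_arcsin]
    simp only [y]
    field_simp
    ring
  rw [← hcos_sq, sqrt_sq (cos_nonneg_of_mem_Icc ⟨by linarith, hφ₁⟩), arccos_cos hφ₀ (by linarith)]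

end Real

theorem stmt_0 (x : ℝ) (hx : x ∈ Set.Icc (0:ℝ) 1) :
    π/4 + x/π ≤ Real.arccos (Real.sqrt (π⁻¹ * Real.arccos x)) ∧
    Real.arccos (Real.sqrt (π⁻¹ * Real.arccos x)) ≤ (π/4) * (1 + x) := by
  obtain ⟨hx₀, hx₁⟩ := hx
  rw [arccos_sqrt_inv_pi_mul_arccos]
  have hy₀ : 0 ≤ 2 / π * arcsin x := mul_nonneg (by positivity) (arcsin_nonneg.2 hx₀)
  have hy₁ : 2 / π * arcsin x ≤ 1 := by
    rw [div_mul_eq_mul_div, div_le_one pi_pos]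
    linarith [arcsin_le_pi_div_two x]
  constructor
  · calc π / 4 + x / π = π / 4 + (2 / π * x) / 2 := by ring
      _ ≤ π / 4 + (2 / π * arcsin x) / 2 := by gcongr; exact self_le_arcsin hx₀ hx₁
      _ ≤ π / 4 + arcsin (2 / π * arcsin x) / 2 := by gcongr; exact self_le_arcsin hy₀ hy₁
  · calc π / 4 + arcsin (2 / π * arcsin x) / 2
        ≤ π / 4 + π / 2 * (2 / π * arcsin x) / 2 := by gcongr; exact arcsin_le_pi_div_two_mul hy₀
      _ = π / 4 + arcsin x / 2 := by field_simp
      _ ≤ π / 4 + π / 2 * x / 2 := by gcongr; exact arcsin_le_pi_div_two_mul hx₀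
      _ = π / 4 * (1 + x) := by ring
end

section
/- The map x ↦ arccos(sqrt((1/π)·arccos(x))) is convex on [0,1]. -/
open Real Set

/-!
Writing `u = arccos x`, the derivative of `arccos (√(u / π))` is `1 / (2 √(u (π - u)) sin u)`.
For `x ∈ (0, 1)` we have `u ∈ (0, π / 2)`, where both `u (π - u)` and `sin u` increase with `u`;
since `u` decreases as `x` increases, the derivative is monotone in `x`.
-/

lemma sqrt_mul_pi_sub_eq {u : ℝ} (hu₀ : 0 ≤ u) (huπ : u ≤ π) :
    √(u * (π - u)) = π * (√(π⁻¹ * u) * √(1 - π⁻¹ * u)) := by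
  have hv₀ : 0 ≤ π⁻¹ * u := by positivity
  have hv₁ : 0 ≤ 1 - π⁻¹ * u := by
    rw [sub_nonneg, inv_mul_le_iff₀ pi_pos]; linarith
  rw [← sqrt_mul hv₀, show u * (π - u) = π ^ 2 * (π⁻¹ * u * (1 - π⁻¹ * u)) by field_simp,
    sqrt_mul (by positivity), sqrt_sq pi_pos.le]

lemma hasDerivAt_arccos_sqrt_arccos {x : ℝ} (hx : x ∈ Ioo (-1) 1) :
    HasDerivAt (fun x => arccos (√(π⁻¹ * arccos x)))
      (2 * √(arccos x * (π - arccos x)) * sin (arccos x))⁻¹ x := by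
  obtain ⟨hx₁, hx₂⟩ := hx
  have hu₀ : 0 < arccos x := arccos_pos.2 hx₂
  have huπ : arccos x < π := arccos_lt_pi.2 hx₁
  have hv₀ : 0 < π⁻¹ * arccos x := by positivity
  have hv₁ : π⁻¹ * arccos x < 1 := by rw [inv_mul_lt_iff₀ pi_pos]; linarith
  have hs₁ : √(π⁻¹ * arccos x) < 1 := (sqrt_lt' one_pos).2 (by simpa using hv₁)
  have hinner := ((hasDerivAt_arccos hx₁.ne' hx₂.ne).const_mul π⁻¹).sqrt hv₀.ne'
  refine ((hasDerivAt_arccos (by linarith [sqrt_nonneg (π⁻¹ * arccos x)]) hs₁.ne).comp x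
    hinner).congr_deriv ?_
  have : 0 < 1 - x ^ 2 := by nlinarith
  have : 0 < 1 - π⁻¹ * arccos x := by linarith
  rw [sin_arccos, sq_sqrt hv₀.le, sqrt_mul_pi_sub_eq hu₀.le huπ.le]
  field_simp

lemma monotoneOn_mul_sub_self (c : ℝ) : MonotoneOn (fun u => u * (c - u)) (Iic (c / 2)) :=
  fun a _ b hb hab => by
    have hb : b ≤ c / 2 := hb
    nlinarith [mul_nonneg (sub_nonneg.2 hab) (show 0 ≤ c - a - b by linarith)]

lemma antitoneOn_inv_sqrt_mul_pi_sub_mul_sin :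
    AntitoneOn (fun u => (2 * √(u * (π - u)) * sin u)⁻¹) (Ioc 0 (π / 2)) := by
  have hsin : MonotoneOn sin (Ioc 0 (π / 2)) := fun a ha b hb hab =>
    sin_le_sin_of_le_of_le_pi_div_two (by linarith [ha.1, pi_pos]) hb.2 hab
  have hsqrt : MonotoneOn (fun u => 2 * √(u * (π - u))) (Ioc 0 (π / 2)) := fun a ha b hb hab =>
    mul_le_mul_of_nonneg_left (sqrt_le_sqrt (monotoneOn_mul_sub_self π ha.2 hb.2 hab)) two_pos.le
  have hpos : MapsTo (fun u => 2 * √(u * (π - u)) * sin u) (Ioc 0 (π / 2)) (Ioi 0) :=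
    fun u ⟨hu₀, hu⟩ => by
      have : 0 < u * (π - u) := mul_pos hu₀ (by linarith [pi_pos])
      have : 0 < sin u := sin_pos_of_pos_of_lt_pi hu₀ (by linarith [pi_pos])
      simp only [mem_Ioi]; positivity
  refine antitoneOn_inv_pos.comp_MonotoneOn (hsqrt.mul hsin (fun u _ => by positivity) ?_) hpos
  exact fun u hu => sin_nonneg_of_nonneg_of_le_pi hu.1.le (by linarith [hu.2, pi_pos])

theorem stmt_1 :
    ConvexOn ℝ (Set.Icc (0:ℝ) 1)
      (fun x => Real.arccos (Real.sqrt (π⁻¹ * Real.arccos x))) := by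
  have hderiv : ∀ x ∈ Ioo (0 : ℝ) 1, HasDerivAt (fun x => arccos (√(π⁻¹ * arccos x)))
      (2 * √(arccos x * (π - arccos x)) * sin (arccos x))⁻¹ x :=
    fun x hx => hasDerivAt_arccos_sqrt_arccos ⟨by linarith [hx.1], hx.2⟩
  have harccos : MapsTo arccos (Ioo 0 1) (Ioc 0 (π / 2)) :=
    fun x hx => ⟨arccos_pos.2 hx.2, (arccos_lt_pi_div_two.2 hx.1).le⟩
  refine MonotoneOn.convexOn_of_deriv (convex_Icc 0 1) (by fun_prop) ?_ ?_ <;> rw [interior_Icc]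
  · exact fun x hx => (hderiv x hx).differentiableAt.differentiableWithinAt
  · refine (antitoneOn_inv_sqrt_mul_pi_sub_mul_sin.comp
      (fun _ _ _ _ h => arccos_le_arccos h) harccos).congr fun x hx => ?_
    exact (hderiv x hx).deriv.symm
end

section
/- Define ξ(s) = φ(s)²/(Q(s)(1-Q(s))) and ζ₀(r) = E[ξ(rS)] for S ~ N(0,1). Then ζ₀(0) = 2/π and ζ₀(r) = 2/π + O(r²) as r → 0. -/
/-!
ξ is smooth and even, so Taylor's theorem gives ξ(s) - 2/π = O(s²) near 0. It is also bounded: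
for s ≥ 0 we have 1 - Q(s) ≥ 1/2, Q(s) ≥ φ(s + 1) and φ(s)² ≤ (3/2) φ(s + 1). Hence
|ξ(s) - 2/π| ≤ K s² for all s, and integrating against the Gaussian, whose second moment is finite,
gives |ζ₀(r) - 2/π| ≤ K E[S²] r².
-/

open Real MeasureTheory Filter Asymptotics

/-- Standard normal density. -/
noncomputable def phi (t : ℝ) : ℝ := (Real.sqrt (2 * π))⁻¹ * Real.exp (-t ^ 2 / 2)

/-- Gaussian tail function `Q(x) = ∫_x^∞ φ`. -/
noncomputable def Qtail (x : ℝ) : ℝ := ∫ t in Set.Ioi x, phi t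

noncomputable def xi (s : ℝ) : ℝ := (phi s) ^ 2 / (Qtail s * (1 - Qtail s))

/-- `ζ₀(r) = E[ξ(rS)]`, `S ~ N(0,1)`. -/
noncomputable def zeta0 (r : ℝ) : ℝ := ∫ s, xi (r * s) ∂(ProbabilityTheory.gaussianReal 0 1)

open Topology
open scoped ContDiff

theorem Function.Even.deriv_zero {f : ℝ → ℝ} (hf : Function.Even f) : deriv f 0 = 0 := by
  have h := deriv_comp_neg (f := f) (x := 0)
  rw [show (fun x ↦ f (-x)) = f from funext hf, neg_zero] at h
  linarith

theorem Function.Even.sub_apply_zero_isBigO_sq {f : ℝ → ℝ} (hf : Function.Even f)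
    (hf₂ : ContDiff ℝ 2 f) : (fun x ↦ f x - f 0) =O[𝓝 0] fun x ↦ x ^ 2 := by
  have htaylor := (taylor_isLittleO_univ (x₀ := 0) hf₂).isBigO
  have hpoly (x : ℝ) :
      taylorWithinEval f 2 Set.univ 0 x = f 0 + iteratedDeriv 2 f 0 / 2 * x ^ 2 := by
    simp [taylor_within_apply, iteratedDerivWithin_univ, hf.deriv_zero]
    ring
  simp only [sub_zero] at htaylor
  refine (htaylor.add ((isBigO_refl _ _).const_mul_left (iteratedDeriv 2 f 0 / 2))).congr_left
    fun x ↦ ?_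
  rw [hpoly]
  ring

theorem exists_abs_le_mul_sq_of_isBigO {g : ℝ → ℝ} {M : ℝ} (hM : ∀ x, |g x| ≤ M)
    (hg : g =O[𝓝 0] fun x ↦ x ^ 2) : ∃ K, ∀ x, |g x| ≤ K * x ^ 2 := by
  obtain ⟨C, hC⟩ := hg.bound
  obtain ⟨ε, hε, hball⟩ := Metric.eventually_nhds_iff.1 hC
  refine ⟨max C (M / ε ^ 2), fun x ↦ ?_⟩
  rcases lt_or_ge |x| ε with hx | hx
  · have h := hball (by simpa using hx)
    rw [Real.norm_eq_abs, Real.norm_eq_abs, abs_of_nonneg (sq_nonneg x)] at h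
    exact h.trans (by gcongr; exact le_max_left _ _)
  · have hM₀ : 0 ≤ M := (abs_nonneg _).trans (hM 0)
    have hεx : ε ^ 2 ≤ x ^ 2 := by rw [← sq_abs x]; gcongr
    calc |g x| ≤ M / ε ^ 2 * ε ^ 2 := by rw [div_mul_cancel₀ _ (by positivity)]; exact hM x
      _ ≤ max C (M / ε ^ 2) * x ^ 2 := by gcongr; exact le_max_right _ _

theorem isBigO_integral_comp_mul {μ : Measure ℝ} (hμ : Integrable (fun s ↦ s ^ 2) μ)
    {g : ℝ → ℝ} {K : ℝ} (hg : ∀ x, |g x| ≤ K * x ^ 2) (l : Filter ℝ) :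
    (fun r ↦ ∫ s, g (r * s) ∂μ) =O[l] fun r ↦ r ^ 2 := by
  refine .of_bound (K * ∫ s, s ^ 2 ∂μ) (Eventually.of_forall fun r ↦ ?_)
  calc ‖∫ s, g (r * s) ∂μ‖ ≤ ∫ s, K * r ^ 2 * s ^ 2 ∂μ := by
        refine norm_integral_le_of_norm_le (f := fun s ↦ g (r * s)) (hμ.const_mul _)
          (Eventually.of_forall fun s ↦ ?_)
        exact (hg (r * s)).trans_eq (by ring)
    _ = K * (∫ s, s ^ 2 ∂μ) * ‖r ^ 2‖ := by
        rw [integral_const_mul, Real.norm_of_nonneg (sq_nonneg r)]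
        ring

theorem phi_eq_gaussianPDFReal : phi = ProbabilityTheory.gaussianPDFReal 0 1 := by
  ext t
  simp [ProbabilityTheory.gaussianPDFReal, phi]

theorem phi_pos (t : ℝ) : 0 < phi t := by
  unfold phi
  positivity

theorem phi_neg (t : ℝ) : phi (-t) = phi t := by
  simp [phi]

theorem contDiff_phi : ContDiff ℝ ∞ phi := by
  unfold phi
  fun_prop

theorem integrable_phi : Integrable phi := by
  rw [phi_eq_gaussianPDFReal]
  exact ProbabilityTheory.integrable_gaussianPDFReal 0 1

theorem integral_phi : ∫ t, phi t = 1 := by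
  rw [phi_eq_gaussianPDFReal]
  exact ProbabilityTheory.integral_gaussianPDFReal_eq_one 0 one_ne_zero

theorem phi_le_phi_of_abs_le {s t : ℝ} (h : |s| ≤ |t|) : phi t ≤ phi s := by
  unfold phi
  have : s ^ 2 ≤ t ^ 2 := sq_le_sq.2 h
  gcongr

theorem phi_sq_le (s : ℝ) : phi s ^ 2 ≤ 3 / 2 * phi (s + 1) := by
  have hc : (sqrt (2 * π))⁻¹ ≤ 1 / 2 := by
    rw [inv_le_comm₀ (by positivity) (by norm_num), Real.le_sqrt (by norm_num) (by positivity)]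
    linarith [pi_gt_three]
  have he : exp (1 - (s - 1) ^ 2 / 2) ≤ 3 :=
    (exp_le_exp.2 (by nlinarith)).trans (exp_one_lt_d9.le.trans (by norm_num))
  have hsplit : phi s ^ 2 = (sqrt (2 * π))⁻¹ * exp (1 - (s - 1) ^ 2 / 2) * phi (s + 1) := by
    have hexp : exp (-s ^ 2 / 2) ^ 2 = exp (1 - (s - 1) ^ 2 / 2) * exp (-(s + 1) ^ 2 / 2) := by
      rw [sq, ← exp_add, ← exp_add]
      ring_nf
    unfold phi
    rw [mul_pow, hexp]
    ring
  rw [hsplit]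
  gcongr
  · exact (phi_pos _).le
  · nlinarith [exp_pos (1 - (s - 1) ^ 2 / 2)]

theorem Qtail_sub_Qtail (a b : ℝ) : Qtail a - Qtail b = ∫ t in a..b, phi t :=
  intervalIntegral.integral_Ioi_sub_Ioi' integrable_phi.integrableOn integrable_phi.integrableOn

theorem hasDerivAt_Qtail (x : ℝ) : HasDerivAt Qtail (-phi x) x := by
  have h : Qtail = fun y ↦ Qtail 0 - ∫ t in (0 : ℝ)..y, phi t := by
    ext y
    rw [← Qtail_sub_Qtail, sub_sub_cancel]
  rw [h]
  exact ((contDiff_phi.continuous.integral_hasStrictDerivAt 0 x).hasDerivAt).const_sub _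

theorem contDiff_Qtail : ContDiff ℝ ∞ Qtail := by
  rw [contDiff_infty_iff_deriv]
  refine ⟨fun x ↦ (hasDerivAt_Qtail x).differentiableAt, ?_⟩
  rw [show deriv Qtail = -phi from funext fun x ↦ (hasDerivAt_Qtail x).deriv]
  exact contDiff_phi.neg

theorem Qtail_antitone : Antitone Qtail := fun a b hab ↦ by
  have hint : 0 ≤ ∫ t in a..b, phi t :=
    intervalIntegral.integral_nonneg hab fun t _ ↦ (phi_pos t).le
  linarith [Qtail_sub_Qtail a b]

theorem Qtail_pos (x : ℝ) : 0 < Qtail x := by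
  unfold Qtail
  rw [setIntegral_pos_iff_support_of_nonneg_ae (Eventually.of_forall fun t ↦ (phi_pos t).le)
    integrable_phi.integrableOn, Function.support_eq_univ fun t ↦ (phi_pos t).ne', Set.univ_inter]
  simp

theorem one_sub_Qtail (x : ℝ) : 1 - Qtail x = Qtail (-x) := by
  have h := intervalIntegral.integral_Iic_add_Ioi (b := x) integrable_phi.integrableOn
    integrable_phi.integrableOn
  rw [integral_phi] at h
  rw [Qtail, Qtail, ← integral_comp_neg_Iic]
  simp only [phi_neg]
  linarith

theorem Qtail_zero : Qtail 0 = 1 / 2 := by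
  have h := one_sub_Qtail 0
  rw [neg_zero] at h
  linarith

theorem phi_add_one_le_Qtail {s : ℝ} (hs : 0 ≤ s) : phi (s + 1) ≤ Qtail s := by
  have hint : phi (s + 1) ≤ ∫ t in s..s + 1, phi t := by
    have := intervalIntegral.integral_mono_on (by linarith : s ≤ s + 1) intervalIntegrable_const
      (integrable_phi.intervalIntegrable) fun t ht ↦
        phi_le_phi_of_abs_le (s := t) (t := s + 1) (by
          rw [abs_of_nonneg (by linarith [ht.1]), abs_of_nonneg (by linarith)]; exact ht.2)
    simpa using this
  rw [← Qtail_sub_Qtail] at hint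
  linarith [Qtail_pos (s + 1)]

theorem Qtail_lt_one (x : ℝ) : Qtail x < 1 := by
  linarith [one_sub_Qtail x, Qtail_pos (-x)]

theorem Qtail_mul_one_sub_pos (x : ℝ) : 0 < Qtail x * (1 - Qtail x) :=
  mul_pos (Qtail_pos x) (by linarith [Qtail_lt_one x])

theorem even_xi : Function.Even xi := fun s ↦ by
  rw [xi, xi, phi_neg, ← one_sub_Qtail, sub_sub_cancel, mul_comm]

theorem contDiff_xi : ContDiff ℝ ∞ xi :=
  (contDiff_phi.pow 2).div (contDiff_Qtail.mul (contDiff_const.sub contDiff_Qtail))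
    fun s ↦ (Qtail_mul_one_sub_pos s).ne'

theorem xi_zero : xi 0 = 2 / π := by
  have hphi : phi 0 ^ 2 = (2 * π)⁻¹ := by
    rw [phi, mul_pow, inv_pow, sq_sqrt (by positivity)]
    simp
  rw [xi, hphi, Qtail_zero]
  field_simp
  ring

theorem xi_nonneg (s : ℝ) : 0 ≤ xi s :=
  div_nonneg (sq_nonneg _) (Qtail_mul_one_sub_pos s).le

theorem xi_le_three (s : ℝ) : xi s ≤ 3 := by
  wlog hs : 0 ≤ s generalizing s
  · rw [← even_xi]
    exact this (-s) (by linarith)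
  have hQ : phi (s + 1) * (1 / 2) ≤ Qtail s * (1 - Qtail s) := by
    have hhalf : Qtail s ≤ 1 / 2 := Qtail_zero ▸ Qtail_antitone hs
    gcongr
    · exact (Qtail_pos s).le
    · exact phi_add_one_le_Qtail hs
    · linarith
  rw [xi, div_le_iff₀ (Qtail_mul_one_sub_pos s)]
  nlinarith [phi_sq_le s, phi_pos (s + 1)]

theorem abs_xi_sub_le (s : ℝ) : |xi s - 2 / π| ≤ 3 := by
  have : 2 / π ≤ 3 := by
    rw [div_le_iff₀ pi_pos]
    linarith [pi_gt_three]
  rw [abs_le]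
  constructor <;> linarith [xi_nonneg s, xi_le_three s, div_nonneg zero_le_two pi_pos.le]

theorem zeta0_sub_eq_integral (r : ℝ) :
    zeta0 r - 2 / π = ∫ s, (xi (r * s) - 2 / π) ∂ProbabilityTheory.gaussianReal 0 1 := by
  have hint : Integrable (fun s ↦ xi (r * s)) (ProbabilityTheory.gaussianReal 0 1) :=
    .of_bound (contDiff_xi.continuous.comp (continuous_const_mul r)).aestronglyMeasurable 3
      (Eventually.of_forall fun s ↦ by
        rw [Real.norm_eq_abs, abs_of_nonneg (xi_nonneg _)]; exact xi_le_three _)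
  rw [integral_sub hint (integrable_const _), integral_const]
  simp [zeta0]

theorem stmt_12 :
    zeta0 0 = 2 / π ∧
    (fun r : ℝ => zeta0 r - 2 / π) =O[nhds 0] (fun r : ℝ => r ^ 2) := by
  have hlocal : (fun s ↦ xi s - 2 / π) =O[𝓝 0] fun s ↦ s ^ 2 := by
    simpa only [xi_zero] using even_xi.sub_apply_zero_isBigO_sq (contDiff_infty.1 contDiff_xi 2)
  obtain ⟨K, hK⟩ := exists_abs_le_mul_sq_of_isBigO abs_xi_sub_le hlocal
  refine ⟨by simp [zeta0, xi_zero], ?_⟩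
  simp_rw [zeta0_sub_eq_integral]
  exact isBigO_integral_comp_mul (ProbabilityTheory.memLp_id_gaussianReal 2).integrable_sq hK _
end
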